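/- arXiv:1410.3356 — 6 statements merged into one kernel-verified Lean document; each statement's English description precedes it below -/
import Mathlib

section
/- Let ξ ∈ ℝ³ with ξ ≠ 0 and let B₃(ξ) be the linear operator on the subspace V = {(X₁,X₂) ∈ ℂ³ × ℂ³ : X₁·ξ = X₂·ξ = 0} defined by B₃(ξ)(X₁,X₂) = (i ξ × X₂, −i ξ × X₁). Then every eigenvalue λ of B₃(ξ) satisfies λ = i|ξ| or λ = −i|ξ|. -/
open Matrix

/-!
Applying `B₃(ξ)` twice gives `X ↦ ξ × (ξ × X) = (ξ·X) ξ - (ξ·ξ) X`, which is `-|ξ|² X` on the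
subspace orthogonal to `ξ`. So an eigenvector for `λ` forces `λ² = -|ξ|²`, i.e. `λ = ±i|ξ|`.
-/

theorem cross_cross_self_of_dotProduct_eq_zero {R : Type*} [CommRing R] {v X : Fin 3 → R}
    (hX : X ⬝ᵥ v = 0) : v ⨯₃ (v ⨯₃ X) = -(v ⬝ᵥ v) • X := by
  rw [cross_cross_eq_smul_sub_smul', dotProduct_comm, hX, zero_smul, zero_sub, neg_smul]

theorem sq_smul_eq_smul_cross_cross {R : Type*} [CommRing R] {v X Y : Fin 3 → R} {a b lam : R}
    (hX : a • v ⨯₃ Y = lam • X) (hY : b • v ⨯₃ X = lam • Y) :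
    lam ^ 2 • X = (a * b) • v ⨯₃ (v ⨯₃ X) := by
  rw [sq, mul_smul, ← hX, smul_comm, ← LinearMap.map_smul, ← hY, LinearMap.map_smul, mul_smul]

theorem sq_smul_eq_neg_dotProduct_smul {R : Type*} [CommRing R] {v X Y : Fin 3 → R}
    {a b lam : R} (hab : a * b = 1) (hXv : X ⬝ᵥ v = 0)
    (hX : a • v ⨯₃ Y = lam • X) (hY : b • v ⨯₃ X = lam • Y) :
    lam ^ 2 • X = -(v ⬝ᵥ v) • X := by
  rw [sq_smul_eq_smul_cross_cross hX hY, hab, one_smul,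
    cross_cross_self_of_dotProduct_eq_zero hXv]

theorem stmt2_general (ξ : Fin 3 → ℝ) (lam : ℂ) (X₁ X₂ : Fin 3 → ℂ)
    (h₁ : X₁ ⬝ᵥ (fun i => (ξ i : ℂ)) = 0) (h₂ : X₂ ⬝ᵥ (fun i => (ξ i : ℂ)) = 0)
    (hX : (X₁, X₂) ≠ 0)
    (e₁ : Complex.I • crossProduct (fun i => (ξ i : ℂ)) X₂ = lam • X₁)
    (e₂ : -(Complex.I • crossProduct (fun i => (ξ i : ℂ)) X₁) = lam • X₂) :
    lam = Complex.I * (Real.sqrt (ξ ⬝ᵥ ξ) : ℂ) ∨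
      lam = -(Complex.I * (Real.sqrt (ξ ⬝ᵥ ξ) : ℂ)) := by
  set v : Fin 3 → ℂ := fun i => (ξ i : ℂ)
  have e₂' : (-Complex.I) • v ⨯₃ X₁ = lam • X₂ := by rwa [neg_smul]
  have hI : Complex.I * -Complex.I = 1 := by simp
  have hI' : -Complex.I * Complex.I = 1 := by simp
  have hsq₁ := sq_smul_eq_neg_dotProduct_smul hI h₁ e₁ e₂'
  have hsq₂ := sq_smul_eq_neg_dotProduct_smul hI' h₂ e₂' e₁
  have hlam : lam ^ 2 = -(v ⬝ᵥ v) := by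
    by_contra hne
    have hne' : lam ^ 2 - -(v ⬝ᵥ v) ≠ 0 := sub_ne_zero.mpr hne
    rw [← sub_eq_zero, ← sub_smul, smul_eq_zero] at hsq₁ hsq₂
    exact hX (Prod.ext (hsq₁.resolve_left hne') (hsq₂.resolve_left hne'))
  have hv : v ⬝ᵥ v = ((Real.sqrt (ξ ⬝ᵥ ξ) : ℝ) : ℂ) ^ 2 := by
    rw [← Complex.ofReal_pow, Real.sq_sqrt (by simpa using dotProduct_self_star_nonneg ξ)]
    exact (Complex.ofRealHom.map_dotProduct ξ ξ).symm
  rw [← sq_eq_sq_iff_eq_or_eq_neg, hlam, hv, mul_pow, Complex.I_sq, neg_one_mul]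

/-- Every eigenvalue of the Maxwell operator `B₃(ξ)(X₁,X₂) = (i ξ × X₂, −i ξ × X₁)` on the
subspace of pairs orthogonal to `ξ` equals `i|ξ|` or `−i|ξ|`. -/
theorem stmt2 (ξ : Fin 3 → ℝ) (hξ : ξ ≠ 0) (lam : ℂ) (X₁ X₂ : Fin 3 → ℂ)
    (h₁ : X₁ ⬝ᵥ (fun i => (ξ i : ℂ)) = 0) (h₂ : X₂ ⬝ᵥ (fun i => (ξ i : ℂ)) = 0)
    (hX : (X₁, X₂) ≠ 0)
    (e₁ : Complex.I • crossProduct (fun i => (ξ i : ℂ)) X₂ = lam • X₁)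
    (e₂ : -(Complex.I • crossProduct (fun i => (ξ i : ℂ)) X₁) = lam • X₂) :
    lam = Complex.I * (Real.sqrt (ξ ⬝ᵥ ξ) : ℂ) ∨
      lam = -(Complex.I * (Real.sqrt (ξ ⬝ᵥ ξ) : ℂ)) :=
  stmt2_general ξ lam X₁ X₂ h₁ h₂ hX e₁ e₂
end

section
/- Let X and Y be Banach spaces and let K₁ : X → X, K₂ : Y → X, K₃ : X → Y, K₄ : Y → Y be bounded linear operators with ‖K₁‖ < 1, ‖K₄‖ < 1, and ‖K₂‖·‖K₃‖ < (1 − ‖K₁‖)(1 − ‖K₄‖). Then the block operator I + K on X × Y, where K(x,y) = (K₁x + K₂y, K₃x + K₄y), is invertible. -/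
/-!
Write `1 + K` as the block operator `[[1 + K₁, K₂], [K₃, 1 + K₄]]`. By the Neumann series
`1 + K₁` is invertible with `‖(1 + K₁)⁻¹‖ ≤ (1 - ‖K₁‖)⁻¹`, so the Schur complement
`1 + K₄ - K₃ (1 + K₁)⁻¹ K₂` differs from `1` by an operator of norm at most
`‖K₄‖ + ‖K₂‖ ‖K₃‖ / (1 - ‖K₁‖) < 1` and is invertible as well. The factorisation of a block
operator as lower unitriangular × block diagonal × upper unitriangular then exhibits `1 + K` as a
product of units.
-/

namespace ContinuousLinearMap

section Semiring

variable {R M N : Type*} [Semiring R]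
  [TopologicalSpace M] [AddCommMonoid M] [Module R M] [ContinuousAdd M]
  [TopologicalSpace N] [AddCommMonoid N] [Module R N] [ContinuousAdd N]

def block (A : M →L[R] M) (B : N →L[R] M) (C : M →L[R] N) (D : N →L[R] N) :
    M × N →L[R] M × N :=
  (A.coprod B).prod (C.coprod D)

@[simp]
lemma block_apply (A : M →L[R] M) (B : N →L[R] M) (C : M →L[R] N) (D : N →L[R] N)
    (p : M × N) : block A B C D p = (A p.1 + B p.2, C p.1 + D p.2) :=
  rfl

lemma block_mul_block (A A' : M →L[R] M) (B B' : N →L[R] M) (C C' : M →L[R] N)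
    (D D' : N →L[R] N) :
    block A B C D * block A' B' C' D' =
      block (A ∘L A' + B ∘L C') (A ∘L B' + B ∘L D') (C ∘L A' + D ∘L C') (C ∘L B' + D ∘L D') := by
  ext p <;> simp [mul_def]

lemma block_id_zero_zero_id : block (.id R M) 0 0 (.id R N) = .id R (M × N) := by
  ext p <;> simp

lemma one_add_block (A : M →L[R] M) (B : N →L[R] M) (C : M →L[R] N) (D : N →L[R] N) :
    1 + block A B C D = block (1 + A) B C (1 + D) := by
  ext p <;> simp

lemma isUnit_block_diag (A : (M →L[R] M)ˣ) (D : (N →L[R] N)ˣ) :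
    IsUnit (block (A : M →L[R] M) 0 0 (D : N →L[R] N)) := by
  refine isUnit_iff_exists.mpr ⟨block ↑A⁻¹ 0 0 ↑D⁻¹, ?_, ?_⟩ <;>
    simp [block_mul_block, ← mul_def, one_def, block_id_zero_zero_id]

end Semiring

section Ring

variable {R M N : Type*} [Ring R]
  [TopologicalSpace M] [AddCommGroup M] [Module R M] [IsTopologicalAddGroup M]
  [TopologicalSpace N] [AddCommGroup N] [Module R N] [IsTopologicalAddGroup N]

lemma isUnit_block_upper (B : N →L[R] M) : IsUnit (block 1 B 0 1) := by
  refine isUnit_iff_exists.mpr ⟨block 1 (-B) 0 1, ?_, ?_⟩ <;>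
    simp [block_mul_block, one_def, block_id_zero_zero_id]

lemma isUnit_block_lower (C : M →L[R] N) : IsUnit (block 1 0 C 1) := by
  refine isUnit_iff_exists.mpr ⟨block 1 0 (-C) 1, ?_, ?_⟩ <;>
    simp [block_mul_block, one_def, block_id_zero_zero_id]

lemma block_eq_lower_mul_diag_mul_upper (A : (M →L[R] M)ˣ) (B : N →L[R] M) (C : M →L[R] N)
    (D : N →L[R] N) :
    block (A : M →L[R] M) B C D =
      block 1 0 (C ∘L ↑A⁻¹) 1 * block (A : M →L[R] M) 0 0 (D - C ∘L ↑A⁻¹ ∘L B) *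
        block 1 (↑A⁻¹ ∘L B) 0 1 := by
  have hAinv : (↑A⁻¹ : M →L[R] M) ∘L ↑A = .id R M := A.inv_mul
  have hinvA : (A : M →L[R] M) ∘L ↑A⁻¹ = .id R M := A.mul_inv
  simp only [one_def, block_mul_block, id_comp, comp_id, comp_zero, zero_comp, add_zero, zero_add,
    comp_sub, sub_self, comp_assoc, hAinv, add_sub_cancel]
  rw [← comp_assoc, hinvA, id_comp]

lemma isUnit_block_of_isUnit_schur (A : (M →L[R] M)ˣ) (B : N →L[R] M) (C : M →L[R] N)
    (D : N →L[R] N) (hS : IsUnit (D - C ∘L ↑A⁻¹ ∘L B)) : IsUnit (block (A : M →L[R] M) B C D) := by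
  rw [block_eq_lower_mul_diag_mul_upper]
  exact ((isUnit_block_lower _).mul (isUnit_block_diag A hS.unit)).mul (isUnit_block_upper _)

end Ring

end ContinuousLinearMap

theorem Units.norm_oneSub_inv_le {R : Type*} [NormedRing R] [HasSummableGeomSeries R] (t : R)
    (ht : ‖t‖ < 1) (h1 : ‖(1 : R)‖ ≤ 1) : ‖(↑(Units.oneSub t ht)⁻¹ : R)‖ ≤ (1 - ‖t‖)⁻¹ :=
  (tsum_geometric_le_of_norm_lt_one t ht).trans (by linarith)

open ContinuousLinearMap

theorem stmt4_general {X Y : Type*} [NormedAddCommGroup X] [NormedSpace ℝ X] [CompleteSpace X]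
    [NormedAddCommGroup Y] [NormedSpace ℝ Y] [CompleteSpace Y]
    (K₁ : X →L[ℝ] X) (K₂ : Y →L[ℝ] X) (K₃ : X →L[ℝ] Y) (K₄ : Y →L[ℝ] Y)
    (h₁ : ‖K₁‖ < 1)
    (h : ‖K₂‖ * ‖K₃‖ < (1 - ‖K₁‖) * (1 - ‖K₄‖)) :
    IsUnit ((1 : (X × Y) →L[ℝ] (X × Y)) +
      ((K₁.comp (ContinuousLinearMap.fst ℝ X Y) +
          K₂.comp (ContinuousLinearMap.snd ℝ X Y)).prod
        (K₃.comp (ContinuousLinearMap.fst ℝ X Y) +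
          K₄.comp (ContinuousLinearMap.snd ℝ X Y)))) := by
  have hK₁ : ‖-K₁‖ < 1 := by rwa [norm_neg]
  set A := Units.oneSub (-K₁) hK₁
  have hA : (A : X →L[ℝ] X) = 1 + K₁ := by simp [A, sub_neg_eq_add]
  have hA_inv : ‖(↑A⁻¹ : X →L[ℝ] X)‖ ≤ (1 - ‖K₁‖)⁻¹ := by
    simpa using Units.norm_oneSub_inv_le (-K₁) hK₁ norm_id_le
  have hT : ‖K₃ ∘L ↑A⁻¹ ∘L K₂ - K₄‖ < 1 := by
    have h₁' : 0 < 1 - ‖K₁‖ := by linarith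
    calc ‖K₃ ∘L ↑A⁻¹ ∘L K₂ - K₄‖ ≤ ‖K₃‖ * ((1 - ‖K₁‖)⁻¹ * ‖K₂‖) + ‖K₄‖ := by
          grw [norm_sub_le, opNorm_comp_le, opNorm_comp_le, hA_inv]
      _ < 1 := by
        rw [← lt_sub_iff_add_lt, ← div_eq_inv_mul, mul_div_assoc', div_lt_iff₀ h₁']
        linarith
  have hS : IsUnit ((1 + K₄) - K₃ ∘L ↑A⁻¹ ∘L K₂) := by
    simpa [sub_sub_eq_add_sub, add_comm] using isUnit_one_sub_of_norm_lt_one hT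
  change IsUnit (1 + block K₁ K₂ K₃ K₄)
  rw [one_add_block, ← hA]
  exact isUnit_block_of_isUnit_schur A K₂ K₃ (1 + K₄) hS

/-- If `‖K₁‖ < 1`, `‖K₄‖ < 1` and `‖K₂‖·‖K₃‖ < (1 − ‖K₁‖)(1 − ‖K₄‖)`, then the block
operator `I + K` on `X × Y`, where `K(x,y) = (K₁x + K₂y, K₃x + K₄y)`, is invertible. -/
theorem stmt4 {X Y : Type*} [NormedAddCommGroup X] [NormedSpace ℝ X] [CompleteSpace X]
    [NormedAddCommGroup Y] [NormedSpace ℝ Y] [CompleteSpace Y]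
    (K₁ : X →L[ℝ] X) (K₂ : Y →L[ℝ] X) (K₃ : X →L[ℝ] Y) (K₄ : Y →L[ℝ] Y)
    (h₁ : ‖K₁‖ < 1) (h₄ : ‖K₄‖ < 1)
    (h : ‖K₂‖ * ‖K₃‖ < (1 - ‖K₁‖) * (1 - ‖K₄‖)) :
    IsUnit ((1 : (X × Y) →L[ℝ] (X × Y)) +
      ((K₁.comp (ContinuousLinearMap.fst ℝ X Y) +
          K₂.comp (ContinuousLinearMap.snd ℝ X Y)).prod
        (K₃.comp (ContinuousLinearMap.fst ℝ X Y) +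
          K₄.comp (ContinuousLinearMap.snd ℝ X Y)))) :=
  stmt4_general K₁ K₂ K₃ K₄ h₁ h
end

section
/- There exists a constant C > 0 such that for all x ≥ 0, all y ∈ ℝ, and all ξ ∈ ℝ³ with |ξ| ≥ 1, one has ∫_{ℝ³} |v|² e^{−|v|²/2} / ((x + ν₀)² + (y + v·ξ)²) dv ≤ C (x + ν₀)⁻¹ |ξ|⁻¹, where ν₀ > 0 is a fixed constant. -/
/-!
Rotating `ξ` to `‖ξ‖ e₀` turns `v·ξ` into `‖ξ‖ v₀`. Since `q e^{-q/2} ≤ 4 e^{-q/4}`, the integrand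
is then dominated by `4 e^{-v₁²/4} e^{-v₂²/4} / (a² + (y + ‖ξ‖ v₀)²)` with `a = x + ν₀`, a product of
one-dimensional integrable functions; the Lorentzian factor integrates to `π / (a ‖ξ‖)` and each
Gaussian to `√(4π)`, giving the constant `16 π²`.
-/

open MeasureTheory Real

theorem integral_univ_inv_sq_add_sq {a : ℝ} (ha : 0 < a) :
    ∫ u : ℝ, (a ^ 2 + u ^ 2)⁻¹ = π / a := by
  have h (u : ℝ) : (a ^ 2 + u ^ 2)⁻¹ = (a ^ 2)⁻¹ * (1 + (u / a) ^ 2)⁻¹ := by field_simp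
  simp_rw [h]
  rw [integral_const_mul, Measure.integral_comp_div (fun u => (1 + u ^ 2)⁻¹),
    integral_univ_inv_one_add_sq, abs_of_pos ha, smul_eq_mul]
  field_simp

theorem integral_univ_inv_sq_add_affine_sq {a s : ℝ} (ha : 0 < a) (hs : 0 < s) (y : ℝ) :
    ∫ t : ℝ, (a ^ 2 + (y + s * t) ^ 2)⁻¹ = π / (a * s) := by
  rw [Measure.integral_comp_mul_left (fun u => (a ^ 2 + (y + u) ^ 2)⁻¹) s,
    integral_add_left_eq_self (fun u => (a ^ 2 + u ^ 2)⁻¹) y, integral_univ_inv_sq_add_sq ha,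
    abs_of_pos (inv_pos.2 hs), smul_eq_mul]
  field_simp

theorem integrable_inv_sq_add_affine_sq {a s : ℝ} (ha : 0 < a) (hs : 0 < s) (y : ℝ) :
    Integrable fun t : ℝ => (a ^ 2 + (y + s * t) ^ 2)⁻¹ :=
  Integrable.of_integral_ne_zero <| by
    rw [integral_univ_inv_sq_add_affine_sq ha hs]; positivity

theorem integral_exp_neg_sq_div_four : ∫ t : ℝ, exp (-t ^ 2 / 4) = √(4 * π) := by
  have h (t : ℝ) : -t ^ 2 / 4 = -4⁻¹ * t ^ 2 := by ring
  simp_rw [h, integral_gaussian, div_inv_eq_mul, mul_comm]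

theorem integrable_exp_neg_sq_div_four : Integrable fun t : ℝ => exp (-t ^ 2 / 4) :=
  Integrable.of_integral_ne_zero <| by
    rw [integral_exp_neg_sq_div_four]; positivity

theorem mul_exp_neg_div_two_le (q : ℝ) : q * exp (-q / 2) ≤ 4 * exp (-q / 4) := by
  have h : q ≤ 4 * exp (q / 4) := by linarith [add_one_le_exp (q / 4)]
  calc q * exp (-q / 2) ≤ 4 * exp (q / 4) * exp (-q / 2) := by gcongr
    _ = 4 * exp (-q / 4) := by rw [mul_assoc, ← exp_add]; ring_nf

theorem integral_norm_inner_eq_norm_mul_inner_unit {E : Type*} [NormedAddCommGroup E]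
    [InnerProductSpace ℝ E] [FiniteDimensional ℝ E] [MeasurableSpace E] [BorelSpace E]
    (g : ℝ → ℝ → ℝ) (ξ : E) {e : E} (he : ‖e‖ = 1) :
    ∫ v : E, g ‖v‖ (inner ℝ v ξ) = ∫ v : E, g ‖v‖ (‖ξ‖ * inner ℝ v e) := by
  have hnorm : ‖ξ‖ = ‖‖ξ‖ • e‖ := by simp [norm_smul, he]
  set R := (ℝ ∙ (ξ - ‖ξ‖ • e))ᗮ.reflection
  have hR : R ξ = ‖ξ‖ • e := Submodule.reflection_sub hnorm
  rw [← integral_comp R]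
  congr 1 with v
  rw [LinearIsometryEquiv.norm_map, ← R.inner_map_map, Submodule.reflection_reflection, hR,
    real_inner_smul_right]

namespace EuclideanSpace

variable {ι : Type*} [Fintype ι]

theorem integrable_prod {f : ι → ℝ → ℝ} (hf : ∀ i, Integrable (f i)) :
    Integrable fun v : EuclideanSpace ℝ ι => ∏ i, f i (v i) :=
  (volume_preserving_symm_measurableEquiv_toLp ι).integrable_comp_emb
    (MeasurableEquiv.toLp 2 (ι → ℝ)).symm.measurableEmbedding |>.2 (Integrable.fintype_prod hf)

theorem integral_prod_eq_prod (f : ι → ℝ → ℝ) :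
    ∫ v : EuclideanSpace ℝ ι, ∏ i, f i (v i) = ∏ i, ∫ t, f i t :=
  ((volume_preserving_symm_measurableEquiv_toLp ι).integral_comp' (fun w => ∏ i, f i (w i))).trans
    (integral_fintype_prod_volume_eq_prod f)

end EuclideanSpace

theorem integral_norm_sq_mul_exp_div_resolvent_le {a s : ℝ} (ha : 0 < a) (hs : 0 < s) (y : ℝ) :
    ∫ v : EuclideanSpace ℝ (Fin 3),
        ‖v‖ ^ 2 * exp (-‖v‖ ^ 2 / 2) / (a ^ 2 + (y + s * v 0) ^ 2)
      ≤ 16 * π ^ 2 / (a * s) := by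
  set F : Fin 3 → ℝ → ℝ :=
    ![fun t => (a ^ 2 + (y + s * t) ^ 2)⁻¹, fun t => exp (-t ^ 2 / 4), fun t => exp (-t ^ 2 / 4)]
  have hF : ∀ i, Integrable (F i) := by
    intro i
    fin_cases i
    exacts [integrable_inv_sq_add_affine_sq ha hs y, integrable_exp_neg_sq_div_four,
      integrable_exp_neg_sq_div_four]
  have hdom (v : EuclideanSpace ℝ (Fin 3)) :
      ‖v‖ ^ 2 * exp (-‖v‖ ^ 2 / 2) / (a ^ 2 + (y + s * v 0) ^ 2) ≤ 4 * ∏ i, F i (v i) := by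
    have hq : ‖v‖ ^ 2 = v 0 ^ 2 + v 1 ^ 2 + v 2 ^ 2 := by
      rw [EuclideanSpace.real_norm_sq_eq, Fin.sum_univ_three]
    have hgauss : exp (-‖v‖ ^ 2 / 4) ≤ exp (-v 1 ^ 2 / 4) * exp (-v 2 ^ 2 / 4) := by
      rw [← exp_add, exp_le_exp, hq]
      linarith [sq_nonneg (v 0)]
    calc ‖v‖ ^ 2 * exp (-‖v‖ ^ 2 / 2) / (a ^ 2 + (y + s * v 0) ^ 2)
        ≤ 4 * exp (-‖v‖ ^ 2 / 4) / (a ^ 2 + (y + s * v 0) ^ 2) := by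
          gcongr ?_ / _; exact mul_exp_neg_div_two_le _
      _ ≤ 4 * (exp (-v 1 ^ 2 / 4) * exp (-v 2 ^ 2 / 4)) / (a ^ 2 + (y + s * v 0) ^ 2) := by
          gcongr
      _ = 4 * ∏ i, F i (v i) := by
          simp only [Fin.prod_univ_three, F, Matrix.cons_val]
          ring
  calc _ ≤ ∫ v : EuclideanSpace ℝ (Fin 3), 4 * ∏ i, F i (v i) :=
        integral_mono_of_nonneg (ae_of_all _ fun v => by positivity)
          ((EuclideanSpace.integrable_prod hF).const_mul 4) (ae_of_all _ hdom)
    _ = 4 * (π / (a * s) * √(4 * π) * √(4 * π)) := by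
        rw [integral_const_mul, EuclideanSpace.integral_prod_eq_prod, Fin.prod_univ_three]
        simp only [F, Matrix.cons_val, integral_univ_inv_sq_add_affine_sq ha hs,
          integral_exp_neg_sq_div_four]
    _ = 16 * π ^ 2 / (a * s) := by
        rw [mul_assoc _ √(4 * π), mul_self_sqrt (by positivity)]
        ring

/-- Gaussian-weighted resolvent integral estimate: for fixed `ν₀ > 0` there is `C > 0` such that
for all `x ≥ 0`, `y ∈ ℝ` and `|ξ| ≥ 1`,
`∫ |v|² e^{−|v|²/2} / ((x+ν₀)² + (y + v·ξ)²) dv ≤ C (x+ν₀)⁻¹ |ξ|⁻¹`. -/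
theorem stmt5 (ν₀ : ℝ) (hν₀ : 0 < ν₀) :
    ∃ C > (0 : ℝ), ∀ x : ℝ, 0 ≤ x → ∀ y : ℝ, ∀ ξ : EuclideanSpace ℝ (Fin 3), 1 ≤ ‖ξ‖ →
      (∫ v : EuclideanSpace ℝ (Fin 3),
          ‖v‖ ^ 2 * Real.exp (-‖v‖ ^ 2 / 2) / ((x + ν₀) ^ 2 + (y + (inner ℝ v ξ : ℝ)) ^ 2))
        ≤ C * (x + ν₀)⁻¹ * ‖ξ‖⁻¹ := by
  refine ⟨16 * π ^ 2, by positivity, fun x hx y ξ hξ => ?_⟩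
  have ha : 0 < x + ν₀ := by positivity
  have hs : 0 < ‖ξ‖ := one_pos.trans_le hξ
  have he : ‖EuclideanSpace.single (0 : Fin 3) (1 : ℝ)‖ = 1 := by simp
  calc _ = ∫ v : EuclideanSpace ℝ (Fin 3),
          ‖v‖ ^ 2 * exp (-‖v‖ ^ 2 / 2) / ((x + ν₀) ^ 2 + (y + ‖ξ‖ * v 0) ^ 2) := by
        rw [integral_norm_inner_eq_norm_mul_inner_unit
          (fun r t => r ^ 2 * exp (-r ^ 2 / 2) / ((x + ν₀) ^ 2 + (y + t) ^ 2)) ξ he]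
        simp [EuclideanSpace.inner_single_right]
    _ ≤ 16 * π ^ 2 / ((x + ν₀) * ‖ξ‖) := integral_norm_sq_mul_exp_div_resolvent_le ha hs y
    _ = 16 * π ^ 2 * (x + ν₀)⁻¹ * ‖ξ‖⁻¹ := by field_simp
end

section
/- There exists a constant C₃ > 0 and ν₁ > 0 such that for all s ≥ 1, ∫_{ℝ³} v₂² e^{−|v|²/2}/(2π)^{3/2} / (ν₁²(1 + |v|²) + (v₁ + 1)² s²) dv ≥ C₃ / s. -/
open MeasureTheory Real Set

/-!
The integrand is nonnegative and dominated by `M / ν₁²`, so it is integrable. On the box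
`[-1 - 1/s, -1 + 1/s] × [1, 2] × [0, 1]`, of volume `2/s`, the shift term `(v₁ + 1)² s²` is at most
`1` while `v₂² ≥ 1` and `|v|² ≤ 9`; there the integrand is bounded below by a constant independent
of `s`, and integrating over the box alone gives the bound `C₃ / s`. (The paper's coordinates
`v₁, v₂, v₃` are `v 0, v 1, v 2` here.)
-/

noncomputable def maxwellian (v : EuclideanSpace ℝ (Fin 3)) : ℝ :=
  exp (-‖v‖ ^ 2 / 2) / (2 * π) ^ ((3 : ℝ) / 2)

lemma maxwellian_nonneg (v : EuclideanSpace ℝ (Fin 3)) : 0 ≤ maxwellian v := by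
  unfold maxwellian; positivity

lemma integrable_maxwellian : Integrable maxwellian := by
  have hgauss : Integrable fun v : EuclideanSpace ℝ (Fin 3) => exp (-(1 / 2) * ‖v‖ ^ 2) := by
    refine Integrable.of_integral_ne_zero ?_
    rw [GaussianFourier.integral_rexp_neg_mul_sq_norm (by norm_num)]
    positivity
  refine (hgauss.div_const ((2 * π) ^ ((3 : ℝ) / 2))).congr (.of_forall fun v => ?_)
  simp only [maxwellian]
  ring_nf

lemma exp_neg_div_two_le_maxwellian {r : ℝ} {v : EuclideanSpace ℝ (Fin 3)} (hv : ‖v‖ ^ 2 ≤ r) :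
    exp (-r / 2) / (2 * π) ^ ((3 : ℝ) / 2) ≤ maxwellian v := by
  unfold maxwellian
  gcongr

noncomputable def weightedMaxwellian (ν s : ℝ) (v : EuclideanSpace ℝ (Fin 3)) : ℝ :=
  (v 1) ^ 2 * maxwellian v / (ν ^ 2 * (1 + ‖v‖ ^ 2) + (v 0 + 1) ^ 2 * s ^ 2)

lemma weightedMaxwellian_nonneg (ν s : ℝ) (v : EuclideanSpace ℝ (Fin 3)) :
    0 ≤ weightedMaxwellian ν s v := by
  have := maxwellian_nonneg v
  unfold weightedMaxwellian; positivity

lemma EuclideanSpace.norm_sq_fin_three (v : EuclideanSpace ℝ (Fin 3)) :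
    ‖v‖ ^ 2 = v 0 ^ 2 + v 1 ^ 2 + v 2 ^ 2 := by
  simp [EuclideanSpace.norm_sq_eq, Fin.sum_univ_three]

lemma weightedMaxwellian_le {ν : ℝ} (hν : ν ≠ 0) (s : ℝ) (v : EuclideanSpace ℝ (Fin 3)) :
    weightedMaxwellian ν s v ≤ maxwellian v / ν ^ 2 := by
  have hM := maxwellian_nonneg v
  have hv1 : v 1 ^ 2 ≤ 1 + ‖v‖ ^ 2 := by
    nlinarith [EuclideanSpace.norm_sq_fin_three v, sq_nonneg (v 0), sq_nonneg (v 2)]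
  calc weightedMaxwellian ν s v
      ≤ v 1 ^ 2 * maxwellian v / (ν ^ 2 * (1 + ‖v‖ ^ 2)) := by
        unfold weightedMaxwellian; gcongr; nlinarith [sq_nonneg ((v 0 + 1) * s)]
    _ ≤ (1 + ‖v‖ ^ 2) * maxwellian v / (ν ^ 2 * (1 + ‖v‖ ^ 2)) := by gcongr
    _ = maxwellian v / ν ^ 2 := by field_simp

lemma integrable_weightedMaxwellian {ν : ℝ} (hν : ν ≠ 0) (s : ℝ) :
    Integrable (weightedMaxwellian ν s) := by
  refine (integrable_maxwellian.div_const (ν ^ 2)).mono' ?_ (.of_forall fun v => ?_)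
  · refine Measurable.aestronglyMeasurable ?_
    unfold weightedMaxwellian maxwellian; fun_prop
  · rw [Real.norm_of_nonneg (weightedMaxwellian_nonneg ν s v)]
    exact weightedMaxwellian_le hν s v

lemma EuclideanSpace.volume_preimage_ofLp_pi {ι : Type*} [Fintype ι] {I : ι → Set ℝ}
    (hI : ∀ i, MeasurableSet (I i)) :
    volume (WithLp.ofLp ⁻¹' univ.pi I : Set (EuclideanSpace ℝ ι)) = ∏ i, volume (I i) := by
  rw [(PiLp.volume_preserving_ofLp ι).measure_preimage (MeasurableSet.univ_pi hI).nullMeasurableSet,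
    volume_pi_pi]

def velocityBox (s : ℝ) : Set (EuclideanSpace ℝ (Fin 3)) :=
  WithLp.ofLp ⁻¹' univ.pi ![Icc (-1 - s⁻¹) (-1 + s⁻¹), Icc 1 2, Icc 0 1]

lemma measurableSet_velocityBox (s : ℝ) : MeasurableSet (velocityBox s) := by
  refine WithLp.measurable_ofLp 2 _ (MeasurableSet.univ_pi fun i => ?_)
  fin_cases i <;> exact measurableSet_Icc

lemma volume_velocityBox (s : ℝ) : volume (velocityBox s) = ENNReal.ofReal (2 / s) := by
  rw [velocityBox, EuclideanSpace.volume_preimage_ofLp_pi, Fin.prod_univ_three]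
  · simp only [Matrix.cons_val_zero, Matrix.cons_val_one, Matrix.cons_val_two, Real.volume_Icc]
    norm_num
    ring_nf
  · intro i; fin_cases i <;> exact measurableSet_Icc

lemma mem_velocityBox {s : ℝ} {v : EuclideanSpace ℝ (Fin 3)} :
    v ∈ velocityBox s ↔ v 0 ∈ Icc (-1 - s⁻¹) (-1 + s⁻¹) ∧ v 1 ∈ Icc 1 2 ∧ v 2 ∈ Icc 0 1 := by
  simp [velocityBox, Fin.forall_fin_succ]

lemma le_weightedMaxwellian_of_mem_velocityBox {ν s : ℝ} (hν : ν ≠ 0) (hs : 1 ≤ s)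
    {v : EuclideanSpace ℝ (Fin 3)} (hv : v ∈ velocityBox s) :
    exp (-9 / 2) / (2 * π) ^ ((3 : ℝ) / 2) / (10 * ν ^ 2 + 1) ≤ weightedMaxwellian ν s v := by
  obtain ⟨⟨hv0, hv0'⟩, ⟨hv1, hv1'⟩, ⟨hv2, hv2'⟩⟩ := mem_velocityBox.mp hv
  have hs0 : 0 < s := one_pos.trans_le hs
  have hsinv : s⁻¹ ≤ 1 := inv_le_one_of_one_le₀ hs
  have hnorm : ‖v‖ ^ 2 ≤ 9 := by
    rw [EuclideanSpace.norm_sq_fin_three]; nlinarith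
  have hshift : (v 0 + 1) ^ 2 * s ^ 2 ≤ 1 := by
    have : |(v 0 + 1) * s| ≤ 1 := by
      rw [abs_mul, abs_of_pos hs0, ← le_div_iff₀ hs0, one_div, abs_le]
      constructor <;> linarith
    nlinarith [sq_abs ((v 0 + 1) * s), abs_nonneg ((v 0 + 1) * s)]
  have hM := exp_neg_div_two_le_maxwellian hnorm
  have hdenom : 0 < ν ^ 2 * (1 + ‖v‖ ^ 2) + (v 0 + 1) ^ 2 * s ^ 2 := by positivity
  have hv1sq : 1 ≤ v 1 ^ 2 := by nlinarith
  unfold weightedMaxwellian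
  refine div_le_div₀ (mul_nonneg (sq_nonneg _) (maxwellian_nonneg v)) ?_ hdenom (by nlinarith)
  nlinarith [maxwellian_nonneg v]

/-- Lower bound for the Maxwellian-weighted integral appearing in the high-frequency spectral
analysis: there are `ν₁ > 0` and `C₃ > 0` such that for all `s ≥ 1`,
`∫ v₂² M(v) / (ν₁²(1+|v|²) + (v₁+1)²s²) dv ≥ C₃ / s`. -/
theorem stmt6 : ∃ ν₁ > (0 : ℝ), ∃ C₃ > (0 : ℝ), ∀ s : ℝ, 1 ≤ s →
    C₃ / s ≤ ∫ v : EuclideanSpace ℝ (Fin 3),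
      (v 1) ^ 2 * (Real.exp (-‖v‖ ^ 2 / 2) / (2 * Real.pi) ^ ((3 : ℝ) / 2)) /
        (ν₁ ^ 2 * (1 + ‖v‖ ^ 2) + (v 0 + 1) ^ 2 * s ^ 2) := by
  set c : ℝ := exp (-9 / 2) / (2 * π) ^ ((3 : ℝ) / 2) / (10 * 1 ^ 2 + 1)
  refine ⟨1, one_pos, 2 * c, by positivity, fun s hs => ?_⟩
  have hint := integrable_weightedMaxwellian one_ne_zero s
  calc 2 * c / s = c * volume.real (velocityBox s) := by
        rw [measureReal_def, volume_velocityBox, ENNReal.toReal_ofReal (by positivity)]; ring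
    _ ≤ ∫ v in velocityBox s, weightedMaxwellian 1 s v :=
        setIntegral_ge_of_const_le_real (measurableSet_velocityBox s)
          (by simp [volume_velocityBox])
          (fun _ hv => le_weightedMaxwellian_of_mem_velocityBox one_ne_zero hs hv)
          hint.integrableOn
    _ ≤ ∫ v, weightedMaxwellian 1 s v :=
        setIntegral_le_integral hint (.of_forall (weightedMaxwellian_nonneg 1 s))
end

section
/- There exists a constant C₄ > 0 such that for all s ≥ 1 and constants ν₀, ν₁ > 0, ∫_{ℝ³} ν₀²(1 + |v|²) v₂² e^{−|v|²/2} / (ν₁² + (v₁ + 1)² s²) dv ≤ C₄ / s. -/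
/-!
Since `(1 + t) t ≤ 32 e^{t/4}` for `t ≥ 0`, the integrand is dominated by
`32 ν₀² e^{-(v₂² + v₃²)/4} / (ν₁² + (v₁ + 1)² s²)`, a product of functions of one coordinate each.
By Fubini its integral factors: the two Gaussian integrals are constants, and the substitution
`u = (v₁ + 1) s` turns the remaining one into the Cauchy integral `π / (ν₁ s)`.
-/

open MeasureTheory Real

namespace EuclideanSpace

variable {ι 𝕜 : Type*} [Fintype ι] [RCLike 𝕜]

theorem integrable_prod_apply {f : ι → ℝ → 𝕜} (hf : ∀ i, Integrable (f i)) :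
    Integrable fun v : EuclideanSpace ℝ ι => ∏ i, f i (v i) := by
  rw [← (PiLp.volume_preserving_toLp ι).integrable_comp_emb
    (MeasurableEquiv.toLp 2 _).measurableEmbedding]
  exact Integrable.fintype_prod hf

theorem integral_prod_apply (f : ι → ℝ → 𝕜) :
    ∫ v : EuclideanSpace ℝ ι, ∏ i, f i (v i) = ∏ i, ∫ x, f i x := by
  rw [← integral_fintype_prod_volume_eq_prod f]
  exact (volume_preserving_symm_measurableEquiv_toLp ι).integral_comp' fun y => ∏ i, f i (y i)

end EuclideanSpace

theorem integral_inv_sq_add_sq_mul_sq {a c : ℝ} (ha : 0 < a) (hc : 0 < c) (d : ℝ) :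
    ∫ x : ℝ, (a ^ 2 + (x + d) ^ 2 * c ^ 2)⁻¹ = π / (a * c) := by
  have hrescale : ∀ x : ℝ, (a ^ 2 + x ^ 2 * c ^ 2)⁻¹ = a⁻¹ ^ 2 * (1 + (c / a * x) ^ 2)⁻¹ := by
    intro x
    field_simp
  rw [integral_add_right_eq_self (fun x => (a ^ 2 + x ^ 2 * c ^ 2)⁻¹) d]
  simp_rw [hrescale]
  rw [integral_const_mul, Measure.integral_comp_mul_left (fun t => (1 + t ^ 2)⁻¹),
    integral_univ_inv_one_add_sq, smul_eq_mul, abs_of_pos (by positivity)]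
  field_simp

theorem integrable_inv_sq_add_sq_mul_sq {a c : ℝ} (ha : 0 < a) (hc : 0 < c) (d : ℝ) :
    Integrable fun x : ℝ => (a ^ 2 + (x + d) ^ 2 * c ^ 2)⁻¹ :=
  .of_integral_ne_zero (by rw [integral_inv_sq_add_sq_mul_sq ha hc]; positivity)

theorem one_add_mul_self_mul_exp_neg_half_le {t : ℝ} (ht : 0 ≤ t) :
    (1 + t) * t * exp (-t / 2) ≤ 32 * exp (-t / 4) := by
  have hpoly : (1 + t) * t ≤ 32 * exp (t / 4) := by
    nlinarith [quadratic_le_exp_of_nonneg (by positivity : 0 ≤ t / 4)]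
  calc (1 + t) * t * exp (-t / 2) ≤ 32 * exp (t / 4) * exp (-t / 2) := by gcongr
    _ = 32 * exp (-t / 4) := by rw [mul_assoc, ← exp_add]; ring_nf

theorem one_add_norm_sq_mul_sq_apply_mul_exp_le {ι : Type*} [Fintype ι]
    (v : EuclideanSpace ℝ ι) (j : ι) :
    (1 + ‖v‖ ^ 2) * v j ^ 2 * exp (-‖v‖ ^ 2 / 2) ≤ 32 * exp (-‖v‖ ^ 2 / 4) := by
  have hj : v j ^ 2 ≤ ‖v‖ ^ 2 := by
    rw [← sq_abs, ← Real.norm_eq_abs]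
    exact pow_le_pow_left₀ (norm_nonneg _) (PiLp.norm_apply_le v j) 2
  calc (1 + ‖v‖ ^ 2) * v j ^ 2 * exp (-‖v‖ ^ 2 / 2)
      ≤ (1 + ‖v‖ ^ 2) * ‖v‖ ^ 2 * exp (-‖v‖ ^ 2 / 2) := by gcongr
    _ ≤ 32 * exp (-‖v‖ ^ 2 / 4) := one_add_mul_self_mul_exp_neg_half_le (by positivity)

theorem exp_neg_norm_sq_div_four_le (v : EuclideanSpace ℝ (Fin 3)) :
    exp (-‖v‖ ^ 2 / 4) ≤ exp (-(1 / 4) * v 1 ^ 2) * exp (-(1 / 4) * v 2 ^ 2) := by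
  rw [← exp_add, EuclideanSpace.norm_sq_eq, Fin.sum_univ_three]
  simp only [Real.norm_eq_abs, sq_abs]
  gcongr
  nlinarith [sq_nonneg (v 0)]

theorem mul_one_add_norm_sq_mul_sq_mul_exp_div_le {c D : ℝ} (hc : 0 ≤ c) (hD : 0 ≤ D)
    (v : EuclideanSpace ℝ (Fin 3)) :
    c * (1 + ‖v‖ ^ 2) * v 1 ^ 2 * exp (-‖v‖ ^ 2 / 2) / D ≤
      32 * c * (D⁻¹ * exp (-(1 / 4) * v 1 ^ 2) * exp (-(1 / 4) * v 2 ^ 2)) := by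
  have hweight := (one_add_norm_sq_mul_sq_apply_mul_exp_le v 1).trans
    (mul_le_mul_of_nonneg_left (exp_neg_norm_sq_div_four_le v) (by norm_num))
  calc _ = c * ((1 + ‖v‖ ^ 2) * v 1 ^ 2 * exp (-‖v‖ ^ 2 / 2)) / D := by ring
    _ ≤ c * (32 * (exp (-(1 / 4) * v 1 ^ 2) * exp (-(1 / 4) * v 2 ^ 2))) / D := by gcongr
    _ = _ := by ring

/-- Upper bound: for fixed `ν₀, ν₁ > 0` there is `C₄ > 0` such that for all `s ≥ 1`,
`∫ ν₀²(1+|v|²) v₂² e^{−|v|²/2} / (ν₁² + (v₁+1)²s²) dv ≤ C₄ / s`. -/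
theorem stmt7 (ν₀ ν₁ : ℝ) (hν₀ : 0 < ν₀) (hν₁ : 0 < ν₁) :
    ∃ C₄ > (0 : ℝ), ∀ s : ℝ, 1 ≤ s →
      (∫ v : EuclideanSpace ℝ (Fin 3),
          ν₀ ^ 2 * (1 + ‖v‖ ^ 2) * (v 1) ^ 2 * Real.exp (-‖v‖ ^ 2 / 2) /
            (ν₁ ^ 2 + (v 0 + 1) ^ 2 * s ^ 2))
        ≤ C₄ / s := by
  refine ⟨128 * π ^ 2 * ν₀ ^ 2 / ν₁, by positivity, fun s hs => ?_⟩
  have hs₀ : 0 < s := by linarith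
  set F : Fin 3 → ℝ → ℝ := ![fun x => (ν₁ ^ 2 + (x + 1) ^ 2 * s ^ 2)⁻¹,
    fun x => exp (-(1 / 4) * x ^ 2), fun x => exp (-(1 / 4) * x ^ 2)] with hF
  have hF_int : ∀ i, Integrable (F i) := by
    intro i
    fin_cases i
    · exact integrable_inv_sq_add_sq_mul_sq hν₁ hs₀ 1
    all_goals exact integrable_exp_neg_mul_sq (by norm_num)
  have hbound : ∀ v : EuclideanSpace ℝ (Fin 3),
      ν₀ ^ 2 * (1 + ‖v‖ ^ 2) * (v 1) ^ 2 * exp (-‖v‖ ^ 2 / 2) / (ν₁ ^ 2 + (v 0 + 1) ^ 2 * s ^ 2)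
        ≤ 32 * ν₀ ^ 2 * ∏ i, F i (v i) := fun v => by
    simpa only [Fin.prod_univ_three, hF, Matrix.cons_val_zero, Matrix.cons_val_one,
      Matrix.cons_val_two, Matrix.head_cons, Matrix.tail_cons]
      using mul_one_add_norm_sq_mul_sq_mul_exp_div_le (sq_nonneg ν₀) (by positivity) v
  calc _ ≤ ∫ v : EuclideanSpace ℝ (Fin 3), 32 * ν₀ ^ 2 * ∏ i, F i (v i) :=
        integral_mono_of_nonneg (ae_of_all _ fun v => by positivity)
          ((EuclideanSpace.integrable_prod_apply hF_int).const_mul _) (ae_of_all _ hbound)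
    _ = 32 * ν₀ ^ 2 * (π / (ν₁ * s) * √(π / (1 / 4)) * √(π / (1 / 4))) := by
        rw [integral_const_mul, EuclideanSpace.integral_prod_apply, Fin.prod_univ_three]
        simp only [hF, Matrix.cons_val_zero, Matrix.cons_val_one, Matrix.cons_val_two,
          Matrix.head_cons, Matrix.tail_cons, integral_gaussian,
          integral_inv_sq_add_sq_mul_sq hν₁ hs₀]
    _ = 128 * π ^ 2 * ν₀ ^ 2 / ν₁ / s := by
        rw [mul_assoc _ √_, mul_self_sqrt (by positivity)]
        field_simp
        ring
end

section
/- Let L ≥ √(4π/b₁) for some b₁ > 0, and let η > 0. Then there exists C₃ > 0 such that for all t ≥ L²: ∫₀^L r² e^{−2ηr²} cos²(t + b₁ r²) dr ≥ C₃. Consequently, for d₀ > 0, d₀²/4 · ∫_{|ξ| ≤ r₀} e^{−2η|ξ|² t} cos²(t + b₁|ξ|² t) dξ ≥ C (1+t)^{−3/2} for all t large enough (depending on r₀, η, b₁, d₀). -/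
/-!
The integral `F_L(t) = ∫₀^L r² e^{-2ηr²} cos²(t + b r²) dr` is continuous and `π`-periodic in `t`.
It is positive for every `t`: since `r ↦ t + b r²` is injective on `r > 0`, the factor
`cos²(t + b r²)` vanishes only at countably many radii. So `F_L` attains a positive minimum.
For the ball integral, polar coordinates and the substitution `r = |ξ|√t` give
`3 |B₁| t^{-3/2} F_{r₀√t}(t)`, and `F_{r₀√t}(t) ≥ F_1(t)` once `r₀√t ≥ 1`.
-/

open MeasureTheory Set Real Metric

theorem intervalIntegral_pos_of_pos_on_diff_countable {f : ℝ → ℝ} {a b : ℝ} {Z : Set ℝ}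
    (hfi : IntervalIntegrable f volume a b) (hZ : Z.Countable)
    (hpos : ∀ x ∈ Ioo a b \ Z, 0 < f x) (hab : a < b) : 0 < ∫ x in a..b, f x := by
  classical
  set g : ℝ → ℝ := Z.piecewise 1 f
  have hfg : f =ᵐ[volume] g := by
    filter_upwards [measure_eq_zero_iff_ae_notMem.mp (hZ.measure_zero volume)] with x hx
    simp [g, hx]
  rw [intervalIntegral.integral_congr_ae (hfg.mono fun x hx _ => hx)]
  refine intervalIntegral.intervalIntegral_pos_of_pos_on
    (hfi.congr_ae (ae_restrict_of_ae hfg)) (fun x hx => ?_) hab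
  by_cases hxZ : x ∈ Z
  · simp [g, hxZ]
  · simpa [g, hxZ] using hpos x ⟨hx, hxZ⟩

theorem Function.Periodic.exists_pos_le_of_continuous {f : ℝ → ℝ} {c : ℝ}
    (hp : Function.Periodic f c) (hc : c ≠ 0) (hf : Continuous f) (hpos : ∀ x, 0 < f x) :
    ∃ m > 0, ∀ x, m ≤ f x := by
  obtain ⟨m, ⟨x₀, rfl⟩, hm⟩ :=
    (hp.compact_of_continuous hc hf).exists_isLeast (range_nonempty f)
  exact ⟨f x₀, hpos x₀, fun x => hm (mem_range_self x)⟩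

theorem integral_closedBall_fun_norm_addHaar {E F : Type*} [NormedAddCommGroup E]
    [NormedSpace ℝ E] [MeasurableSpace E] [NormedAddCommGroup F] [NormedSpace ℝ F]
    [Nontrivial E] (μ : Measure E) [FiniteDimensional ℝ E] [BorelSpace E]
    [μ.IsAddHaarMeasure] (f : ℝ → F) {R : ℝ} (hR : 0 ≤ R) :
    ∫ x in closedBall (0 : E) R, f ‖x‖ ∂μ =
      Module.finrank ℝ E • μ.real (ball 0 1) •
        ∫ y in (0 : ℝ)..R, y ^ (Module.finrank ℝ E - 1) • f y := by
  have hball : ∫ x in closedBall (0 : E) R, f ‖x‖ ∂μ = ∫ x, (Iic R).indicator f ‖x‖ ∂μ := by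
    rw [← integral_indicator measurableSet_closedBall]
    congr 1 with x
    by_cases hx : ‖x‖ ≤ R <;> simp [hx]
  have hradial : ∫ y in Ioi (0 : ℝ), y ^ (Module.finrank ℝ E - 1) • (Iic R).indicator f y =
      ∫ y in (0 : ℝ)..R, y ^ (Module.finrank ℝ E - 1) • f y := by
    rw [intervalIntegral.integral_of_le hR, ← Ioi_inter_Iic,
      ← setIntegral_indicator measurableSet_Iic]
    congr 1 with y
    by_cases hyR : y ≤ R <;> simp [hyR]
  rw [hball, integral_fun_norm_addHaar, hradial]

theorem one_add_rpow_neg_three_halves_le {t : ℝ} (ht : 0 < t) :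
    (1 + t) ^ (-(3 : ℝ) / 2) ≤ (t * √t)⁻¹ := by
  have : (t * √t)⁻¹ = t ^ (-(3 : ℝ) / 2) := by
    rw [sqrt_eq_rpow, ← rpow_one_add' ht.le (by norm_num), ← rpow_neg ht.le]
    norm_num
  rw [this]
  exact rpow_le_rpow_of_nonpos ht (by linarith) (by norm_num)

theorem countable_setOf_cos_eq_zero : {x : ℝ | cos x = 0}.Countable :=
  (countable_range fun k : ℤ => (2 * k + 1) * π / 2).mono fun _ hx =>
    (cos_eq_zero_iff.mp hx).imp fun _ h => h.symm

theorem countable_setOf_cos_add_mul_sq_eq_zero {b : ℝ} (hb : b ≠ 0) (t : ℝ) :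
    (Ioi 0 ∩ {r : ℝ | cos (t + b * r ^ 2) = 0}).Countable := by
  refine MapsTo.countable_of_injOn (f := fun r => t + b * r ^ 2) (fun r hr => hr.2) ?_
    countable_setOf_cos_eq_zero
  rintro r ⟨hr, -⟩ s ⟨hs, -⟩ h
  have : r ^ 2 = s ^ 2 := mul_left_cancel₀ hb (add_left_cancel h)
  exact (pow_left_inj₀ hr.le hs.le two_ne_zero).mp this

noncomputable def oscillatoryIntegral (b η L t : ℝ) : ℝ :=
  ∫ r in (0 : ℝ)..L, r ^ 2 * exp (-2 * η * r ^ 2) * cos (t + b * r ^ 2) ^ 2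

theorem continuous_oscillatoryIntegral (b η L : ℝ) :
    Continuous (oscillatoryIntegral b η L) := by
  unfold oscillatoryIntegral; fun_prop

theorem periodic_oscillatoryIntegral (b η L : ℝ) :
    Function.Periodic (oscillatoryIntegral b η L) π := by
  intro t
  simp only [oscillatoryIntegral, add_right_comm t π, cos_add_pi, neg_sq]

theorem oscillatoryIntegral_pos (η : ℝ) {b L : ℝ} (hb : b ≠ 0) (hL : 0 < L) (t : ℝ) :
    0 < oscillatoryIntegral b η L t := by
  refine intervalIntegral_pos_of_pos_on_diff_countable
    (by apply Continuous.intervalIntegrable; fun_prop)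
    (countable_setOf_cos_add_mul_sq_eq_zero hb t) (fun r ⟨hr, hrZ⟩ => ?_) hL
  have hcos : cos (t + b * r ^ 2) ≠ 0 := fun h => hrZ ⟨hr.1, h⟩
  have hr0 : r ≠ 0 := hr.1.ne'
  positivity

theorem exists_pos_le_oscillatoryIntegral (η : ℝ) {b L : ℝ} (hb : b ≠ 0) (hL : 0 < L) :
    ∃ C > 0, ∀ t, C ≤ oscillatoryIntegral b η L t :=
  (periodic_oscillatoryIntegral b η L).exists_pos_le_of_continuous pi_ne_zero
    (continuous_oscillatoryIntegral b η L) (oscillatoryIntegral_pos η hb hL)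

theorem monotoneOn_oscillatoryIntegral (b η t : ℝ) :
    MonotoneOn (fun L => oscillatoryIntegral b η L t) (Ici 0) := fun L hL L' _ hLL' =>
  intervalIntegral.integral_mono_interval le_rfl hL hLL'
    (.of_forall fun r => by positivity) (by apply Continuous.intervalIntegrable; fun_prop)

theorem integral_closedBall_eq_oscillatoryIntegral (b η : ℝ) {t R : ℝ} (ht : 0 < t)
    (hR : 0 ≤ R) :
    ∫ ξ in closedBall (0 : EuclideanSpace ℝ (Fin 3)) R,
        exp (-2 * η * ‖ξ‖ ^ 2 * t) * cos (t + b * ‖ξ‖ ^ 2 * t) ^ 2 =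
      3 * volume.real (ball (0 : EuclideanSpace ℝ (Fin 3)) 1) / (t * √t) *
        oscillatoryIntegral b η (R * √t) t := by
  set f : ℝ → ℝ := fun y => exp (-2 * η * y ^ 2 * t) * cos (t + b * y ^ 2 * t) ^ 2
  set G : ℝ → ℝ := fun r => r ^ 2 * exp (-2 * η * r ^ 2) * cos (t + b * r ^ 2) ^ 2
  have hs : 0 < √t := sqrt_pos.mpr ht
  have hG : ∀ y, G (y * √t) = t * (y ^ 2 * f y) := fun y => by
    simp only [G, f, mul_pow, sq_sqrt ht.le]
    ring_nf
  have hscale :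
      oscillatoryIntegral b η (R * √t) t = t * √t * ∫ y in (0 : ℝ)..R, y ^ 2 * f y := by
    have := intervalIntegral.integral_comp_mul_right G (a := 0) (b := R) hs.ne'
    simp only [hG, intervalIntegral.integral_const_mul, zero_mul, smul_eq_mul] at this
    calc oscillatoryIntegral b η (R * √t) t = ∫ r in (0 : ℝ)..R * √t, G r := rfl
      _ = t * √t * ∫ y in (0 : ℝ)..R, y ^ 2 * f y := by
        rw [← mul_inv_cancel_left₀ hs.ne' (∫ r in (0 : ℝ)..R * √t, G r), ← this]
        ring
  rw [integral_closedBall_fun_norm_addHaar volume f hR, finrank_euclideanSpace_fin, hscale]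
  simp only [smul_eq_mul, nsmul_eq_mul]
  field_simp
  ring

theorem exists_rpow_le_integral_closedBall (η : ℝ) {b : ℝ} (hb : b ≠ 0) {R : ℝ}
    (hR : 0 < R) :
    ∃ C > 0, ∃ t₀ : ℝ, ∀ t, t₀ ≤ t → C * (1 + t) ^ (-(3 : ℝ) / 2) ≤
      ∫ ξ in closedBall (0 : EuclideanSpace ℝ (Fin 3)) R,
        exp (-2 * η * ‖ξ‖ ^ 2 * t) * cos (t + b * ‖ξ‖ ^ 2 * t) ^ 2 := by
  obtain ⟨C₃, hC₃, hle⟩ := exists_pos_le_oscillatoryIntegral η hb one_pos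
  set c := 3 * volume.real (ball (0 : EuclideanSpace ℝ (Fin 3)) 1)
  have hc : 0 < c := mul_pos three_pos <|
    ENNReal.toReal_pos (measure_ball_pos volume _ one_pos).ne' measure_ball_lt_top.ne
  refine ⟨c * C₃, by positivity, R⁻¹ ^ 2, fun t ht => ?_⟩
  have ht0 : 0 < t := (by positivity : (0 : ℝ) < R⁻¹ ^ 2).trans_le ht
  have hRt : 1 ≤ R * √t := by
    have := mul_le_mul_of_nonneg_left ((le_sqrt (by positivity) ht0.le).mpr ht) hR.le
    rwa [mul_inv_cancel₀ hR.ne'] at this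
  rw [integral_closedBall_eq_oscillatoryIntegral b η ht0 hR.le]
  calc c * C₃ * (1 + t) ^ (-(3 : ℝ) / 2)
      ≤ c * C₃ * (t * √t)⁻¹ := by gcongr; exact one_add_rpow_neg_three_halves_le ht0
    _ = c / (t * √t) * C₃ := by ring
    _ ≤ c / (t * √t) * oscillatoryIntegral b η (R * √t) t := by
        gcongr
        exact (hle t).trans <| monotoneOn_oscillatoryIntegral b η t (mem_Ici.2 zero_le_one)
          (mem_Ici.2 (zero_le_one.trans hRt)) hRt

theorem stmt13_general (b₁ η : ℝ) (hb₁ : 0 < b₁)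
    (L : ℝ) (hL : Real.sqrt (4 * Real.pi / b₁) ≤ L) :
    (∃ C₃ > (0 : ℝ), ∀ t : ℝ, L ^ 2 ≤ t →
      C₃ ≤ ∫ r in (0 : ℝ)..L,
        r ^ 2 * Real.exp (-2 * η * r ^ 2) * (Real.cos (t + b₁ * r ^ 2)) ^ 2) ∧
    (∀ r₀ > (0 : ℝ), ∀ d₀ > (0 : ℝ), ∃ C > (0 : ℝ), ∃ t₀ : ℝ, ∀ t : ℝ, t₀ ≤ t →
      C * (1 + t) ^ (-(3 : ℝ) / 2) ≤
        d₀ ^ 2 / 4 *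
          ∫ ξ in Metric.closedBall (0 : EuclideanSpace ℝ (Fin 3)) r₀,
            Real.exp (-2 * η * ‖ξ‖ ^ 2 * t) * (Real.cos (t + b₁ * ‖ξ‖ ^ 2 * t)) ^ 2) := by
  have hL0 : 0 < L := (sqrt_pos.mpr (by positivity)).trans_le hL
  obtain ⟨C₃, hC₃, hle⟩ := exists_pos_le_oscillatoryIntegral η hb₁.ne' hL0
  refine ⟨⟨C₃, hC₃, fun t _ => hle t⟩, fun r₀ hr₀ d₀ hd₀ => ?_⟩
  obtain ⟨C, hC, t₀, hCle⟩ := exists_rpow_le_integral_closedBall η hb₁.ne' hr₀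
  refine ⟨d₀ ^ 2 / 4 * C, by positivity, t₀, fun t ht => ?_⟩
  rw [mul_assoc]
  exact mul_le_mul_of_nonneg_left (hCle t ht) (by positivity)

/-- Oscillatory lower bounds: for `b₁, η > 0` and `L ≥ √(4π/b₁)` there is `C₃ > 0` with
`∫₀^L r² e^{−2ηr²} cos²(t+b₁r²) dr ≥ C₃` for all `t ≥ L²`; consequently, for `r₀, d₀ > 0`,
`d₀²/4 · ∫_{|ξ|≤r₀} e^{−2η|ξ|²t} cos²(t+b₁|ξ|²t) dξ ≥ C (1+t)^{−3/2}` for large `t`. -/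
theorem stmt13 (b₁ η : ℝ) (hb₁ : 0 < b₁) (hη : 0 < η)
    (L : ℝ) (hL : Real.sqrt (4 * Real.pi / b₁) ≤ L) :
    (∃ C₃ > (0 : ℝ), ∀ t : ℝ, L ^ 2 ≤ t →
      C₃ ≤ ∫ r in (0 : ℝ)..L,
        r ^ 2 * Real.exp (-2 * η * r ^ 2) * (Real.cos (t + b₁ * r ^ 2)) ^ 2) ∧
    (∀ r₀ > (0 : ℝ), ∀ d₀ > (0 : ℝ), ∃ C > (0 : ℝ), ∃ t₀ : ℝ, ∀ t : ℝ, t₀ ≤ t →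
      C * (1 + t) ^ (-(3 : ℝ) / 2) ≤
        d₀ ^ 2 / 4 *
          ∫ ξ in Metric.closedBall (0 : EuclideanSpace ℝ (Fin 3)) r₀,
            Real.exp (-2 * η * ‖ξ‖ ^ 2 * t) * (Real.cos (t + b₁ * ‖ξ‖ ^ 2 * t)) ^ 2) :=
  stmt13_general b₁ η hb₁ L hL
end
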